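/- For any tree T, the set of vertices maximizing f_T (the subtree core of T) consists of either a single vertex or two adjacent vertices. -/

import Mathlib

open SimpleGraph

/-- `numContaining G v`: the number of connected subgraphs of `G` containing `v`. -/
noncomputable def numContaining {V : Type*} (G : SimpleGraph V) (v : V) : ℕ :=
  Nat.card {H : G.Subgraph // H.Connected ∧ v ∈ H.verts}

/-!
Write `f = numContaining G` and `a(u, v)` for the number of connected subgraphs containing `u`
but not `v`. Splitting the subgraphs containing `u` according to whether they contain `v` gives
`f u + a(v, u) = f v + a(u, v)`. Along a path `u - v - w` of a tree, adding the edge `uv` injects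
the subgraphs counted by `a(u, v)` into those counted by `a(v, w)` (a connected subgraph through
`u` and `w` must pass through `v`), and misses the single vertex `v`; so `a(u, v) < a(v, w)`.
Combining the two identities at `uv` and `vw` shows that `f` is strictly concave along paths,
`f u + f w < 2 f v`. Hence `f` strictly decreases along a path once it has stopped increasing,
so two maximizers of `f` are adjacent, and as a tree has no triangles there are at most two.
-/

namespace SimpleGraph

variable {V : Type*} {G : SimpleGraph V} {u v w : V}

lemma IsAcyclic.mem_verts_of_adj_of_adj (hG : G.IsAcyclic) (huv : G.Adj u v) (hvw : G.Adj v w)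
    (huw : u ≠ w) {H : G.Subgraph} (hH : H.Connected) (hu : u ∈ H.verts) (hw : w ∈ H.verts) :
    v ∈ H.verts := by
  classical
  obtain ⟨p, hpH⟩ := (Subgraph.connected_iff_forall_exists_walk_subgraph H).mp hH |>.2 hu hw
  have hv : v ∈ p.bypass.support :=
    hG.mem_support_of_ne_mem_support_of_adj_of_isPath p.bypass_isPath
      huv.isPath_toWalk hvw.symm (by simp [huv.support_toWalk, huw.symm, hvw.ne'])
  exact (Walk.toSubgraph_bypass_le_toSubgraph.trans hpH).1
    ((Walk.mem_verts_toSubgraph _).mpr hv)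

lemma Subgraph.deleteVerts_sup_subgraphOfAdj {H : G.Subgraph} (huv : G.Adj u v)
    (hu : u ∈ H.verts) (hv : v ∉ H.verts) : (H ⊔ G.subgraphOfAdj huv).deleteVerts {v} = H := by
  ext a b
  · simp only [deleteVerts_verts, verts_sup, subgraphOfAdj_verts, Set.mem_sdiff, Set.mem_union,
      Set.mem_insert_iff, Set.mem_singleton_iff]
    grind
  · simp only [deleteVerts_adj, sup_adj, subgraphOfAdj_adj, verts_sup, subgraphOfAdj_verts,
      Set.mem_union, Set.mem_insert_iff, Set.mem_singleton_iff, Sym2.eq_iff]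
    grind [Subgraph.Adj.fst_mem, Subgraph.Adj.snd_mem]

lemma IsClique.eq_singleton_or_eq_pair {s : Set V} (hs : G.IsClique s) (hG : G.CliqueFree 3)
    (hne : s.Nonempty) : (∃ v, s = {v}) ∨ ∃ v w, G.Adj v w ∧ s = {v, w} := by
  obtain ⟨v, hv⟩ := hne
  by_cases hsv : s ⊆ {v}
  · exact .inl ⟨v, (Set.nonempty_of_mem hv).subset_singleton_iff.mp hsv⟩
  obtain ⟨w, hw, hwv⟩ := Set.not_subset.mp hsv
  have hvw : G.Adj v w := hs hv hw (Ne.symm hwv)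
  refine .inr ⟨v, w, hvw, Set.Subset.antisymm (fun x hx => ?_) (Set.insert_subset hv (by simpa))⟩
  classical
  by_contra hxvw
  simp only [Set.mem_insert_iff, Set.mem_singleton_iff, not_or] at hxvw
  exact hG {x, v, w} (is3Clique_triple_iff.mpr ⟨hs hx hv hxvw.1, hs hx hw hxvw.2, hvw⟩)

end SimpleGraph

noncomputable def numContainingAvoiding {V : Type*} (G : SimpleGraph V) (u v : V) : ℕ :=
  {H : G.Subgraph | H.Connected ∧ u ∈ H.verts ∧ v ∉ H.verts}.ncard

section Counting

variable {V : Type*} [Finite V] {G : SimpleGraph V} {u v w : V}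

lemma numContaining_eq_ncard_add_numContainingAvoiding (u v : V) :
    numContaining G u =
      {H : G.Subgraph | H.Connected ∧ u ∈ H.verts ∧ v ∈ H.verts}.ncard
        + numContainingAvoiding G u v := by
  refine (Nat.card_coe_set_eq {H : G.Subgraph | H.Connected ∧ u ∈ H.verts}).trans ?_
  rw [← Set.ncard_inter_add_ncard_sdiff_eq_ncard _ {H | v ∈ H.verts} (Set.toFinite _)]
  congr 2 <;> ext <;> simp [and_assoc]

lemma numContaining_add_numContainingAvoiding (u v : V) :
    numContaining G u + numContainingAvoiding G v u =
      numContaining G v + numContainingAvoiding G u v := by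
  rw [numContaining_eq_ncard_add_numContainingAvoiding u v,
    numContaining_eq_ncard_add_numContainingAvoiding v u]
  have hboth : {H : G.Subgraph | H.Connected ∧ u ∈ H.verts ∧ v ∈ H.verts} =
      {H | H.Connected ∧ v ∈ H.verts ∧ u ∈ H.verts} := by
    simp only [and_comm (a := u ∈ _)]
  rw [hboth]
  ring

lemma SimpleGraph.IsAcyclic.numContainingAvoiding_lt (hG : G.IsAcyclic) (huv : G.Adj u v)
    (hvw : G.Adj v w) (huw : u ≠ w) :
    numContainingAvoiding G u v < numContainingAvoiding G v w := by
  set extend : G.Subgraph → G.Subgraph := (· ⊔ G.subgraphOfAdj huv)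
  have hmaps : Set.MapsTo extend {H | H.Connected ∧ u ∈ H.verts ∧ v ∉ H.verts}
      {H | H.Connected ∧ v ∈ H.verts ∧ w ∉ H.verts} := by
    rintro H ⟨hH, hu, hv⟩
    refine ⟨Subgraph.connected_sup hH.preconnected
      (Subgraph.subgraphOfAdj_connected huv).preconnected ⟨u, hu, by simp⟩, by simp [extend], ?_⟩
    simp only [extend, Subgraph.verts_sup, subgraphOfAdj_verts, Set.mem_union,
      Set.mem_insert_iff, Set.mem_singleton_iff, not_or]
    exact ⟨fun hw => hv (hG.mem_verts_of_adj_of_adj huv hvw huw hH hu hw), huw.symm, hvw.ne'⟩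
  have hinj : Set.InjOn extend {H | H.Connected ∧ u ∈ H.verts ∧ v ∉ H.verts} := by
    rintro H₁ ⟨-, hu₁, hv₁⟩ H₂ ⟨-, hu₂, hv₂⟩ heq
    rw [← Subgraph.deleteVerts_sup_subgraphOfAdj huv hu₁ hv₁,
      ← Subgraph.deleteVerts_sup_subgraphOfAdj huv hu₂ hv₂]
    exact congrArg (Subgraph.deleteVerts · {v}) heq
  have hsingleton : G.singletonSubgraph v ∈
      {H : G.Subgraph | H.Connected ∧ v ∈ H.verts ∧ w ∉ H.verts} \
        extend '' {H | H.Connected ∧ u ∈ H.verts ∧ v ∉ H.verts} := by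
    refine ⟨⟨Subgraph.singletonSubgraph_connected, rfl, by simpa using hvw.ne'⟩, ?_⟩
    rintro ⟨H, ⟨-, hu, -⟩, heq⟩
    have hu' : u ∈ (extend H).verts := Or.inl hu
    rw [heq] at hu'
    exact huv.ne hu'
  unfold numContainingAvoiding
  rw [← hinj.ncard_image]
  exact Set.ncard_lt_ncard ⟨hmaps.image_subset, fun hsub => hsingleton.2 (hsub hsingleton.1)⟩
    (Set.toFinite _)

lemma SimpleGraph.IsAcyclic.numContaining_add_numContaining_lt (hG : G.IsAcyclic)
    (huv : G.Adj u v) (hvw : G.Adj v w) (huw : u ≠ w) :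
    numContaining G u + numContaining G w < 2 * numContaining G v := by
  have := numContaining_add_numContainingAvoiding (G := G) u v
  have := numContaining_add_numContainingAvoiding (G := G) v w
  have := hG.numContainingAvoiding_lt huv hvw huw
  have := hG.numContainingAvoiding_lt hvw.symm huv.symm huw.symm
  omega

lemma SimpleGraph.IsAcyclic.numContaining_lt_of_isPath (hG : G.IsAcyclic) (huv : G.Adj u v)
    {p : G.Walk v w} (hp : (Walk.cons huv p).IsPath) (hwv : w ≠ v)
    (hle : numContaining G v ≤ numContaining G u) : numContaining G w < numContaining G v := by
  induction p generalizing u with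
  | nil => exact absurd rfl hwv
  | @cons v x w hvx q ih =>
    rw [Walk.cons_isPath_iff, Walk.support_cons, List.mem_cons, not_or] at hp
    have hconcave := hG.numContaining_add_numContaining_lt huv hvx
      fun hux => hp.2.2 (hux ▸ q.start_mem_support)
    rcases eq_or_ne w x with rfl | hwx
    · omega
    · exact (ih hvx hp.1 hwx (by omega)).trans (by omega)

lemma SimpleGraph.IsTree.isClique_setOf_forall_numContaining_le (hG : G.IsTree) :
    G.IsClique {x | ∀ u, numContaining G u ≤ numContaining G x} := by
  intro a ha b hb hab
  obtain ⟨p, hp⟩ := (hG.connected.preconnected a b).exists_isPath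
  cases p with
  | nil => exact absurd rfl hab
  | @cons _ c _ hac q =>
    by_contra hnadj
    have hlt := hG.isAcyclic.numContaining_lt_of_isPath hac hp
      (fun hbc => hnadj (hbc ▸ hac)) (ha c)
    exact (hlt.trans_le ((ha c).trans (hb a))).false

end Counting

/-- The subtree core of a tree (the set of vertices maximizing the number of subtrees
containing them) consists of either one vertex or two adjacent vertices. -/
theorem subtree_core_singleton_or_adjacent_pair {V : Type*} [Fintype V]
    (G : SimpleGraph V) (hT : G.IsTree) :
    (∃ v : V, {x : V | ∀ u : V, numContaining G u ≤ numContaining G x} = {v}) ∨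
    (∃ v w : V, G.Adj v w ∧
      {x : V | ∀ u : V, numContaining G u ≤ numContaining G x} = {v, w}) := by
  have : Nonempty V := hT.connected.nonempty
  obtain ⟨v, hv⟩ := Finite.exists_max (numContaining G)
  exact hT.isClique_setOf_forall_numContaining_le.eq_singleton_or_eq_pair
    (hT.isAcyclic.cliqueFree le_rfl) ⟨v, hv⟩
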